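/- (L2 count for su(m)) Let k ≥ 2 and let ~_1,...,~_k be equivalence relations on {1,...,m} with largest class sizes q_1,...,q_k. Suppose Σ q_i ≤ (k−1)m − 1. Then for every equivalence relation ≡ on {1,...,m} with t ≥ 2 classes, letting N = {(p,q) : p ≠ q, p ≢ q} and H_i = {(p,q) ∈ N : p ~_i q}, we have Σ_{i=1}^k |H_i| ≤ (k−1)|N| − (t−1). -/

import Mathlib

/-!
Fix `i` and an `≡`-class `C`. Writing `a_D = |D ∩ C|` and `b_D = |D \ C|` for the `~_i`-classes
`D`, the pairs of `H_i` starting in `C` number `∑ a_D b_D`. As `a_D + b_D ≤ q_i`, Sedrakyan's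
inequality gives `m ∑ a_D b_D ≤ q_i |C| (m - |C|)`, and summing over `C` yields
`m |H_i| ≤ q_i |N|`. Each point is `≢` to at least one point of each of the other `t - 1` classes,
so `m (t - 1) ≤ |N|`. Adding up, `m (∑ |H_i| + t - 1) ≤ (∑ q_i + 1) |N| ≤ (k - 1) m |N|`.
-/

open Finset

theorem Finset.sum_add_mul_sum_mul_le {ι : Type*} (s : Finset ι) (a b : ι → ℕ) (q : ℕ)
    (hpos : ∀ i ∈ s, 0 < a i + b i) (hq : ∀ i ∈ s, a i + b i ≤ q) :
    (∑ i ∈ s, (a i + b i)) * ∑ i ∈ s, a i * b i ≤ q * ((∑ i ∈ s, a i) * ∑ i ∈ s, b i) := by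
  rcases s.eq_empty_or_nonempty with rfl | hs
  · simp
  set x : ι → ℝ := fun i => a i
  set y : ι → ℝ := fun i => b i
  have hpos' : ∀ i ∈ s, 0 < x i + y i := fun i hi => by
    simp only [x, y]; exact_mod_cast hpos i hi
  have hterm : ∀ i ∈ s, x i * y i ≤ q * (x i - x i ^ 2 / (x i + y i)) := by
    intro i hi
    have hqi : x i + y i ≤ q := by simpa [x, y] using (Nat.cast_le (α := ℝ)).2 (hq i hi)
    have hne := (hpos' i hi).ne'
    rw [show x i - x i ^ 2 / (x i + y i) = x i * y i / (x i + y i) by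
      field_simp; ring, mul_div_assoc', le_div_iff₀ (hpos' i hi), mul_comm (q : ℝ)]
    exact mul_le_mul_of_nonneg_left hqi (mul_nonneg (Nat.cast_nonneg (a i)) (Nat.cast_nonneg (b i)))
  have hsed := sq_sum_div_le_sum_sq_div s x hpos'
  set A : ℝ := ∑ i ∈ s, x i
  set B : ℝ := ∑ i ∈ s, y i
  have hN : ∑ i ∈ s, (x i + y i) = A + B := sum_add_distrib
  have hNpos : 0 < A + B := hN ▸ sum_pos hpos' hs
  have hsum : ∑ i ∈ s, x i * y i ≤ q * (A - A ^ 2 / (A + B)) :=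
    calc ∑ i ∈ s, x i * y i ≤ ∑ i ∈ s, q * (x i - x i ^ 2 / (x i + y i)) := sum_le_sum hterm
      _ = q * (A - ∑ i ∈ s, x i ^ 2 / (x i + y i)) := by rw [← mul_sum, sum_sub_distrib]
      _ ≤ q * (A - A ^ 2 / (A + B)) := by rw [hN] at hsed; gcongr
  have hscaled : (A + B) * ∑ i ∈ s, x i * y i ≤ q * (A * B) :=
    calc (A + B) * ∑ i ∈ s, x i * y i ≤ (A + B) * (q * (A - A ^ 2 / (A + B))) := by gcongr
      _ = q * (A * B) := by field_simp; ring
  rw [← hN] at hscaled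
  simp only [x, y, A, B] at hscaled
  exact_mod_cast hscaled

namespace Finpartition

variable {α : Type*} [DecidableEq α] {s : Finset α} (P : Finpartition s)

theorem sum_eq_sum_parts {M : Type*} [AddCommMonoid M] (f : α → Finset α → M) :
    ∑ x ∈ s, f x (P.part x) = ∑ D ∈ P.parts, ∑ x ∈ D, f x D := by
  rw [← sum_fiberwise_of_maps_to (g := P.part) fun x hx => P.part_mem.2 hx]
  refine sum_congr rfl fun D hD => ?_
  have hfiber : {x ∈ s | P.part x = D} = D := by
    ext x
    rw [mem_filter, P.part_eq_iff_mem hD]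
    exact ⟨And.right, fun hx => ⟨P.le hD hx, hx⟩⟩
  rw [hfiber]
  exact sum_congr rfl fun x hx => by rw [P.part_eq_of_mem hD hx]

theorem sum_comp_part_of_subset {M : Type*} [AddCommMonoid M] {C : Finset α} (hC : C ⊆ s)
    (f : Finset α → M) : ∑ x ∈ C, f (P.part x) = ∑ D ∈ P.parts, #(D ∩ C) • f D := by
  calc ∑ x ∈ C, f (P.part x) = ∑ x ∈ s, if x ∈ C then f (P.part x) else 0 := by
        rw [← sum_filter, filter_mem_eq_inter, inter_eq_right.2 hC]
    _ = ∑ D ∈ P.parts, ∑ x ∈ D, if x ∈ C then f D else 0 :=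
        P.sum_eq_sum_parts fun x D => if x ∈ C then f D else 0
    _ = ∑ D ∈ P.parts, #(D ∩ C) • f D := sum_congr rfl fun D _ => by rw [sum_ite_mem, sum_const]

theorem card_parts_sub_one_le_card_sdiff_part {a : α} (ha : a ∈ s) :
    #P.parts - 1 ≤ #(s \ P.part a) := by
  have hsub : P.parts.erase (P.part a) ⊆ (s \ P.part a).image P.part := by
    intro D hD
    obtain ⟨hDa, hD⟩ := mem_erase.1 hD
    obtain ⟨x, hx⟩ := P.nonempty_of_mem_parts hD
    have hxD := P.part_eq_of_mem hD hx
    refine mem_image.2 ⟨x, mem_sdiff.2 ⟨P.le hD hx, fun hxa => hDa ?_⟩, hxD⟩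
    rw [← hxD, P.part_eq_of_mem (P.part_mem.2 ha) hxa]
  calc #P.parts - 1 = #(P.parts.erase (P.part a)) := (card_erase_of_mem (P.part_mem.2 ha)).symm
    _ ≤ #((s \ P.part a).image P.part) := card_le_card hsub
    _ ≤ #(s \ P.part a) := card_image_le

theorem card_mul_sum_card_part_sdiff_le {q : ℕ} (hq : ∀ D ∈ P.parts, #D ≤ q) {C : Finset α}
    (hC : C ⊆ s) : #s * ∑ x ∈ C, #(P.part x \ C) ≤ q * (#C * #(s \ C)) := by
  have hsplit : ∀ D, #(D ∩ C) + #(D \ C) = #D := fun D => card_inter_add_card_sdiff D C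
  have hA : ∑ D ∈ P.parts, #(D ∩ C) = #C := by
    simpa using (P.sum_comp_part_of_subset hC fun _ => (1 : ℕ)).symm
  have hS : ∑ D ∈ P.parts, (#(D ∩ C) + #(D \ C)) = #s := by
    simp only [hsplit]
    exact P.sum_card_parts
  have hB : ∑ D ∈ P.parts, #(D \ C) = #(s \ C) := by
    rw [card_sdiff_of_subset hC, ← hS, sum_add_distrib, hA]
    omega
  rw [P.sum_comp_part_of_subset hC fun D => #(D \ C), ← hB, ← hA, ← hS]
  simp only [smul_eq_mul]
  exact sum_add_mul_sum_mul_le _ _ _ q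
    (fun D hD => (hsplit D).symm ▸ card_pos.2 (P.nonempty_of_mem_parts hD))
    (fun D hD => (hsplit D).symm ▸ hq D hD)

end Finpartition

section EquivalenceRelations

theorem Finset.card_filter_prod_eq_sum {α : Type*} [Fintype α] (r : α → α → Prop) [DecidableRel r] :
    #{pq : α × α | r pq.1 pq.2} = ∑ p, #{x | r p x} := by
  simp only [card_filter]
  exact Fintype.sum_prod_type _

variable {α : Type*} [Fintype α] [DecidableEq α]

theorem Finpartition.part_ofSetoid {r : α → α → Prop} [DecidableRel r] (hr : Equivalence r)
    (a : α) : (ofSetoid ⟨r, hr⟩).part a = ({x | r a x} : Finset α) := by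
  ext x
  rw [mem_part_ofSetoid_iff_rel, mem_filter]
  exact (and_iff_right (mem_univ x)).symm

theorem card_mul_card_rel_not_rel_le {R E : α → α → Prop} [DecidableRel R] [DecidableRel E]
    (hR : Equivalence R) (hE : Equivalence E) {q : ℕ} (hq : ∀ p, #{x | R p x} ≤ q) :
    Fintype.card α * #{pq : α × α | R pq.1 pq.2 ∧ ¬E pq.1 pq.2}
      ≤ q * #{pq : α × α | ¬E pq.1 pq.2} := by
  set PR := Finpartition.ofSetoid ⟨R, hR⟩
  set PE := Finpartition.ofSetoid ⟨E, hE⟩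
  have hPR : ∀ D ∈ PR.parts, #D ≤ q := by
    intro D hD
    obtain ⟨p, -, rfl⟩ := PR.part_surjOn hD
    exact (Finpartition.part_ofSetoid hR p).symm ▸ hq p
  have hH : #{pq : α × α | R pq.1 pq.2 ∧ ¬E pq.1 pq.2}
      = ∑ C ∈ PE.parts, ∑ p ∈ C, #(PR.part p \ C) := by
    rw [card_filter_prod_eq_sum fun p x => R p x ∧ ¬E p x,
      ← PE.sum_eq_sum_parts fun p C => #(PR.part p \ C)]
    refine sum_congr rfl fun p _ => congrArg card ?_
    ext x
    simp [Finpartition.part_ofSetoid, PR, PE]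
  have hN : #{pq : α × α | ¬E pq.1 pq.2} = ∑ C ∈ PE.parts, #C * #(univ \ C) := by
    rw [card_filter_prod_eq_sum fun p x => ¬E p x]
    calc ∑ p, #{x | ¬E p x} = ∑ p, #(univ \ PE.part p) := by
          simp only [PE, Finpartition.part_ofSetoid, filter_not]
      _ = ∑ C ∈ PE.parts, ∑ _p ∈ C, #(univ \ C) := PE.sum_eq_sum_parts fun _ C => #(univ \ C)
      _ = ∑ C ∈ PE.parts, #C * #(univ \ C) := by simp only [sum_const, smul_eq_mul]
  rw [hH, hN, mul_sum, mul_sum]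
  refine sum_le_sum fun C _ => ?_
  simpa using PR.card_mul_sum_card_part_sdiff_le hPR (subset_univ C)

theorem card_mul_card_parts_sub_one_le {E : α → α → Prop} [DecidableRel E] (hE : Equivalence E) :
    Fintype.card α * (#(Finpartition.ofSetoid ⟨E, hE⟩).parts - 1)
      ≤ #{pq : α × α | ¬E pq.1 pq.2} := by
  set PE := Finpartition.ofSetoid ⟨E, hE⟩
  rw [card_filter_prod_eq_sum fun p x => ¬E p x, ← smul_eq_mul, ← card_univ, ← sum_const]
  refine sum_le_sum fun p _ => ?_
  have := PE.card_parts_sub_one_le_card_sdiff_part (mem_univ p)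
  rwa [Finpartition.part_ofSetoid, ← filter_not] at this

end EquivalenceRelations

theorem su_L2_count_general (m k t : ℕ) (hm : 0 < m)
    (R : Fin k → Fin m → Fin m → Prop) [∀ i, DecidableRel (R i)]
    (hR : ∀ i, Equivalence (R i))
    (E : Fin m → Fin m → Prop) [DecidableRel E] (hE : Equivalence E)
    (q : Fin k → ℕ)
    (hqub : ∀ i p, (Finset.univ.filter (fun x => R i p x)).card ≤ q i)
    (hsum : (∑ i, q i) + 1 ≤ (k - 1) * m)
    (hclasses : (Finset.univ.image
      (fun p : Fin m => Finset.univ.filter (fun x => E p x))).card = t) :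
    (∑ i, (Finset.univ.filter (fun pq : Fin m × Fin m =>
        R i pq.1 pq.2 ∧ ¬ E pq.1 pq.2)).card) + (t - 1)
      ≤ (k - 1) * (Finset.univ.filter (fun pq : Fin m × Fin m =>
          ¬ E pq.1 pq.2)).card := by
  set N := #{pq : Fin m × Fin m | ¬E pq.1 pq.2}
  have hH : ∀ i, m * #{pq : Fin m × Fin m | R i pq.1 pq.2 ∧ ¬E pq.1 pq.2} ≤ q i * N := by
    simpa using fun i => card_mul_card_rel_not_rel_le (hR i) hE (hqub i)
  have hN : m * (t - 1) ≤ N := by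
    calc m * (t - 1) = Fintype.card (Fin m) * (#(Finpartition.ofSetoid ⟨E, hE⟩).parts - 1) := by
          rw [Fintype.card_fin, ← hclasses]; rfl
      _ ≤ N := card_mul_card_parts_sub_one_le hE
  refine Nat.le_of_mul_le_mul_left ?_ hm
  calc m * ((∑ i, #{pq : Fin m × Fin m | R i pq.1 pq.2 ∧ ¬E pq.1 pq.2}) + (t - 1))
      = (∑ i, m * #{pq : Fin m × Fin m | R i pq.1 pq.2 ∧ ¬E pq.1 pq.2}) + m * (t - 1) := by
        rw [mul_add, mul_sum]
    _ ≤ (∑ i, q i * N) + N := add_le_add (sum_le_sum fun i _ => hH i) hN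
    _ = ((∑ i, q i) + 1) * N := by rw [add_mul, one_mul, sum_mul]
    _ ≤ (k - 1) * m * N := Nat.mul_le_mul_right N hsum
    _ = m * ((k - 1) * N) := by ring

/-- `L²` count for `su(m)`: let `~_1, …, ~_k` (`k ≥ 2`) be equivalence relations on
`Fin m` with largest class sizes `q_i`, and suppose `Σ q_i ≤ (k−1)m − 1`. Then for any
equivalence relation `≡` on `Fin m` with `t ≥ 2` classes, writing
`N = {(p,q) : ¬(p ≡ q)}` and `H_i = {(p,q) ∈ N : p ~_i q}`, we have
`Σ_i |H_i| ≤ (k−1)|N| − (t−1)`, stated additively. -/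
theorem su_L2_count (m k t : ℕ) (hm : 0 < m) (hk : 2 ≤ k) (ht : 2 ≤ t)
    (R : Fin k → Fin m → Fin m → Prop) [∀ i, DecidableRel (R i)]
    (hR : ∀ i, Equivalence (R i))
    (E : Fin m → Fin m → Prop) [DecidableRel E] (hE : Equivalence E)
    (q : Fin k → ℕ)
    (hqub : ∀ i p, (Finset.univ.filter (fun x => R i p x)).card ≤ q i)
    (hsum : (∑ i, q i) + 1 ≤ (k - 1) * m)
    (hclasses : (Finset.univ.image
      (fun p : Fin m => Finset.univ.filter (fun x => E p x))).card = t) :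
    (∑ i, (Finset.univ.filter (fun pq : Fin m × Fin m =>
        R i pq.1 pq.2 ∧ ¬ E pq.1 pq.2)).card) + (t - 1)
      ≤ (k - 1) * (Finset.univ.filter (fun pq : Fin m × Fin m =>
          ¬ E pq.1 pq.2)).card :=
  su_L2_count_general m k t hm R hR E hE q hqub hsum hclasses
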